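/- For system (C), the parabola f₂(x,y) = ((g − 1)/g)·x² + y = 0 is an invariant algebraic curve if and only if ℓ = 0; moreover, when ℓ = 0 the polynomial identity p·∂f₂/∂x + q·∂f₂/∂y = K₂·f₂ holds with cofactor K₂(x,y) = 2g·x. -/

import Mathlib

open MvPolynomial

/-- Right-hand side p of system (C). -/
noncomputable def pC (g : ℝ) : MvPolynomial (Fin 2) ℝ :=
  C g * X 1 + C g * X 0 ^ 2

/-- Right-hand side q of system (C). -/
noncomputable def qC (ℓ : ℝ) : MvPolynomial (Fin 2) ℝ :=
  C ℓ * X 1 + C 2 * X 0 * X 1 + C ℓ * X 0 ^ 2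

/-- The parabola `f₂ = ((g - 1)/g)x² + y`. -/
noncomputable def f2C (g : ℝ) : MvPolynomial (Fin 2) ℝ :=
  C ((g - 1) / g) * X 0 ^ 2 + X 1

/-!
The derivative of `f₂` along system (C) is `2g·x·f₂ + ℓ·(y + x²)`. So `ℓ = 0` gives the
cofactor `2g·x`; conversely, at the point `(1, (1 - g)/g)` of the parabola the remainder
`ℓ·(y + x²)` equals `ℓ/g`, and it must vanish there if `f₂` divides the derivative.
-/

theorem MvPolynomial.eq_zero_of_mul_add_C_mul_eq_mul {σ R : Type*} [CommRing R] [IsDomain R]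
    {f r K K' : MvPolynomial σ R} {a : R} (x : σ → R) (hf : eval x f = 0) (hr : eval x r ≠ 0)
    (h : K' * f + C a * r = K * f) : a = 0 := by
  have := congrArg (eval x) h
  simp only [map_add, map_mul, eval_C, hf, mul_zero, zero_add] at this
  exact (mul_eq_zero.mp this).resolve_right hr

theorem pC_mul_pderiv_f2C_add_qC_mul_pderiv_f2C {g : ℝ} (hg : g ≠ 0) (ℓ : ℝ) :
    pC g * pderiv 0 (f2C g) + qC ℓ * pderiv 1 (f2C g)
      = (C (2 * g) * X 0) * f2C g + C ℓ * (X 1 + X 0 ^ 2) := by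
  have hcoeff : (C g : MvPolynomial (Fin 2) ℝ) * C ((g - 1) / g) = C g - 1 := by
    rw [← C_mul, mul_div_cancel₀ _ hg, C_sub, C_1]
  simp only [pC, qC, f2C, map_add, Derivation.leibniz, Derivation.leibniz_pow, pderiv_C,
    pderiv_X_self, pderiv_X_of_ne (show (1 : Fin 2) ≠ 0 by decide),
    pderiv_X_of_ne (show (0 : Fin 2) ≠ 1 by decide), C_mul, map_ofNat, smul_eq_mul,
    mul_zero, add_zero, mul_one]
  linear_combination (2 * X 0 * X 1 : MvPolynomial (Fin 2) ℝ) * hcoeff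

theorem eval_f2C_one_sub_div (g : ℝ) : eval ![1, (1 - g) / g] (f2C g) = 0 := by
  simp only [f2C, map_add, map_mul, map_pow, eval_C, eval_X, Matrix.cons_val_zero,
    Matrix.cons_val_one]
  ring

theorem eval_X_one_add_X_zero_sq_one_sub_div_ne_zero {g : ℝ} (hg : g ≠ 0) :
    eval ![1, (1 - g) / g] (X 1 + X 0 ^ 2 : MvPolynomial (Fin 2) ℝ) ≠ 0 := by
  have hval : (1 - g) / g + 1 = 1 / g := by field_simp; ring
  simpa [hval] using hg

/-- For system (C), the parabola `f₂ = 0` is an invariant algebraic curve if and only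
if `ℓ = 0`; moreover when `ℓ = 0` the identity holds with cofactor `K₂ = 2g·x`. -/
theorem invariant_parabola_f2_sysC (g ℓ : ℝ) (hg : g ≠ 0) :
    ((∃ K : MvPolynomial (Fin 2) ℝ,
        pC g * pderiv 0 (f2C g) + qC ℓ * pderiv 1 (f2C g)
          = K * f2C g) ↔ ℓ = 0) ∧
    (ℓ = 0 →
      pC g * pderiv 0 (f2C g) + qC ℓ * pderiv 1 (f2C g)
        = (C (2 * g) * X 0) * f2C g) := by
  rw [pC_mul_pderiv_f2C_add_qC_mul_pderiv_f2C hg]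
  have cofactor : ℓ = 0 → (C (2 * g) * X 0) * f2C g + C ℓ * (X 1 + X 0 ^ 2)
      = (C (2 * g) * X 0) * f2C g := by
    rintro rfl
    simp
  refine ⟨⟨fun ⟨K, hK⟩ => ?_, fun hℓ => ⟨_, cofactor hℓ⟩⟩, cofactor⟩
  exact eq_zero_of_mul_add_C_mul_eq_mul _ (eval_f2C_one_sub_div g)
    (eval_X_one_add_X_zero_sq_one_sub_div_ne_zero hg) hK
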